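/- arXiv:2503.02110 — 8 statements merged into one kernel-verified Lean document; each statement's English description precedes it below -/
import Mathlib

section
/- Let (λ_m)_{m≥1} be a sequence of positive reals with liminf_{m→∞} λ_m/m > 10. For every L* ∈ [0,1/2) and every L' with L* ≤ L' < 1/2, there exist a measurable space X (one may take X = {0,1}^ℕ with the product σ-algebra), a probability measure D on X × {0,1}, and a hypothesis class consisting of two measurable predictors h_0, h_1 with prior π(h_0) = 0.1, π(h_1) = 0.9, L(h_0) = L*, and L(h_1) = L', such that for every sequence (A_m)_{m≥1} in which A_m is an MDL_{λ_m} selection rule for sample size m, E_{S~D^m}[L(A_m(S))] → L' as m → ∞. -/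
open MeasureTheory Filter

noncomputable def binEnt (p : ℝ) : ℝ :=
  -(p * Real.logb 2 p) - (1 - p) * Real.logb 2 (1 - p)

noncomputable def klBin (a b : ℝ) : ℝ :=
  a * Real.logb 2 (a / b) + (1 - a) * Real.logb 2 ((1 - a) / (1 - b))

structure LearningSetup (X : Type) [MeasurableSpace X] (I : Type) where
  countable : Countable I
  D : Measure (X × Bool)
  isProb : IsProbabilityMeasure D
  hyp : I → X → Bool
  hyp_measurable : ∀ i, Measurable (hyp i)
  prior : I → ℝ
  prior_nonneg : ∀ i, 0 ≤ prior i
  prior_le_one : ∀ i, prior i ≤ 1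
  prior_tsum_le_one : ∑' i, ENNReal.ofReal (prior i) ≤ 1

namespace LearningSetup

variable {X I : Type} [MeasurableSpace X] (L : LearningSetup X I)

/-- Description length `|i|_π = -log₂ π(i)`. -/
noncomputable def desc (i : I) : ℝ := -Real.logb 2 (L.prior i)

/-- Population error `L(i)`. -/
noncomputable def popErr (i : I) : ℝ := (L.D {p | L.hyp i p.1 ≠ p.2}).toReal

/-- Number of sample errors `m · L_S(i)`. -/
def errCount (m : ℕ) (i : I) (S : Fin m → X × Bool) : ℕ :=
  (Finset.univ.filter fun t => L.hyp i (S t).1 ≠ (S t).2).card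

/-- Empirical error `L_S(i)`. -/
noncomputable def empErr (m : ℕ) (i : I) (S : Fin m → X × Bool) : ℝ :=
  (L.errCount m i S : ℝ) / (m : ℝ)

/-- MDL objective `J_λ(i, S) = λ·|i|_π + log₂ C(m, m·L_S(i))`. -/
noncomputable def J (lam : ℝ) (m : ℕ) (i : I) (S : Fin m → X × Bool) : ℝ :=
  lam * L.desc i + Real.logb 2 (m.choose (L.errCount m i S) : ℝ)

/-- The m-fold product measure `D^m`. -/
noncomputable def sampleMeasure (m : ℕ) : Measure (Fin m → X × Bool) :=
  haveI := L.isProb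
  Measure.pi fun _ => L.D

/-- `A` is an MDL_λ selection rule for sample size `m`. -/
def IsMDLRule (lam : ℝ) (m : ℕ) (A : (Fin m → X × Bool) → I) : Prop :=
  (@Measurable (Fin m → X × Bool) I inferInstance ⊤ A) ∧
  ∀ᵐ S ∂ L.sampleMeasure m,
    L.empErr m (A S) S ≤ 1 / 2 ∧
    ∀ i : I, L.empErr m i S ≤ 1 / 2 → L.J lam m (A S) S ≤ L.J lam m i S

/-- Expected population error `E_{S ~ D^m}[L(A(S))]`. -/
noncomputable def expectedRisk (m : ℕ) (A : (Fin m → X × Bool) → I) : ℝ :=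
  ∫ S, L.popErr (A S) ∂ L.sampleMeasure m

end LearningSetup

open ProbabilityTheory
open scoped Finset

/-!
Take `X = Bool × Bool` carrying two independent coins of biases `L*` and `L'`, let the label always
be `false`, and let `h₀`, `h₁` be the two coordinate projections. Then
`λ_m (|h₀|_π - |h₁|_π) = λ_m log₂ 9` exceeds `m ≥ log₂ C(m, k)`, so an MDL rule selects `h₁`
whenever `h₁` is admissible, i.e. has empirical error at most `1/2`. By Hoeffding's inequality
`h₁` is inadmissible with probability at most `exp (-2m (1/2 - L')²)`, hence the expected risk
tends to `L(h₁) = L'`.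
-/
theorem measureReal_pi_card_filter_ge_le {α : Type*} [MeasurableSpace α] (μ : Measure α)
    [IsProbabilityMeasure μ] {p : α → Prop} [DecidablePred p] (hp : MeasurableSet {x | p x})
    {c : ℝ} (hc : μ.real {x | p x} ≤ c) (m : ℕ) :
    (Measure.pi fun _ : Fin m => μ).real {S | m * c ≤ #{t | p (S t)}} ≤
      Real.exp (-2 * m * (c - μ.real {x | p x}) ^ 2) := by
  set q := μ.real {x | p x}
  set f : α → ℝ := {x | p x}.indicator 1
  have hf : Measurable f := measurable_one.indicator hp
  have hsubG : HasSubgaussianMGF (fun x => f x - q) ((‖(1 : ℝ) - 0‖₊ / 2) ^ 2) μ := by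
    rw [show q = μ[f] from (integral_indicator_one hp).symm]
    refine hasSubgaussianMGF_of_mem_Icc hf.aemeasurable (ae_of_all _ fun x => ?_)
    by_cases hx : p x <;> simp [f, hx]
  have hsubG_pi (t : Fin m) : HasSubgaussianMGF (fun S : Fin m → α => f (S t) - q)
      ((‖(1 : ℝ) - 0‖₊ / 2) ^ 2) (Measure.pi fun _ => μ) :=
    HasSubgaussianMGF.of_map (measurable_pi_apply t).aemeasurable
      (by rwa [(measurePreserving_eval (fun _ => μ) t).map_eq])
  have hindep : iIndepFun (fun (t : Fin m) (S : Fin m → α) => f (S t) - q)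
      (Measure.pi fun _ => μ) :=
    iIndepFun_pi (X := fun _ x => f x - q) fun _ => (hf.sub_const _).aemeasurable
  have hoeffding := HasSubgaussianMGF.measure_sum_ge_le_of_iIndepFun hindep
    (s := Finset.univ) (fun t _ => hsubG_pi t) (ε := m * (c - q))
    (mul_nonneg m.cast_nonneg (sub_nonneg.2 hc))
  have hset : {S : Fin m → α | m * c ≤ #{t | p (S t)}} =
      {S | m * (c - q) ≤ ∑ t, (f (S t) - q)} := by
    ext S
    simp [f, Set.indicator_apply, Finset.sum_sub_distrib, mul_sub]
  rw [hset]
  refine hoeffding.trans_eq ?_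
  congr 1
  rcases eq_or_ne m 0 with rfl | hm
  · simp
  · simp
    field_simp

theorem logb_choose_le (m k : ℕ) : Real.logb 2 (m.choose k) ≤ m := by
  rcases Nat.eq_zero_or_pos (m.choose k) with h | h
  · simp only [h, CharP.cast_eq_zero, Real.logb_zero, Nat.cast_nonneg]
  · calc Real.logb 2 (m.choose k) ≤ Real.logb 2 ((2 : ℝ) ^ m) :=
          Real.logb_le_logb_of_le one_lt_two (by exact_mod_cast h)
            (by exact_mod_cast Nat.choose_le_two_pow m k)
      _ = m := by rw [Real.logb_pow, Real.logb_self_eq_one one_lt_two, mul_one]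

namespace LearningSetup

variable {X I : Type} [MeasurableSpace X] (L : LearningSetup X I)

instance : IsProbabilityMeasure L.D := L.isProb

instance (m : ℕ) : IsProbabilityMeasure (L.sampleMeasure m) := by
  unfold sampleMeasure; infer_instance

theorem measurableSet_hyp_ne (i : I) : MeasurableSet {p : X × Bool | L.hyp i p.1 ≠ p.2} :=
  (measurableSet_eq_fun ((L.hyp_measurable i).comp measurable_fst) measurable_snd).compl

theorem popErr_nonneg (i : I) : 0 ≤ L.popErr i := ENNReal.toReal_nonneg

theorem popErr_le_one (i : I) : L.popErr i ≤ 1 := measureReal_le_one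

theorem measurable_empErr (m : ℕ) (i : I) : Measurable (L.empErr m i) := by
  unfold empErr errCount
  simp_rw [Finset.natCast_card_filter]
  exact (Finset.measurable_sum _ fun t _ => Measurable.ite
    ((L.measurableSet_hyp_ne i).preimage (measurable_pi_apply t)) measurable_const
    measurable_const).div_const _

theorem measureReal_empErr_gt_half_le (i : I) (hi : L.popErr i ≤ 1 / 2) (m : ℕ) :
    (L.sampleMeasure m).real {S | 1 / 2 < L.empErr m i S} ≤
      Real.exp (-2 * m * (1 / 2 - L.popErr i) ^ 2) := by
  refine (measureReal_mono fun S hS => ?_).trans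
    (measureReal_pi_card_filter_ge_le L.D (L.measurableSet_hyp_ne i) hi m)
  have hS : 1 / 2 < (L.errCount m i S : ℝ) / m := hS
  have hm : (0 : ℝ) < m := Nat.cast_pos.2 (Nat.pos_of_ne_zero (by rintro rfl; norm_num at hS))
  rw [lt_div_iff₀ hm] at hS
  exact hS.le.trans_eq' (mul_comm _ _)

theorem tendsto_measureReal_empErr_gt_half (i : I) (hi : L.popErr i < 1 / 2) :
    Tendsto (fun m => (L.sampleMeasure m).real {S | 1 / 2 < L.empErr m i S}) atTop (nhds 0) := by
  have hexp : Tendsto (fun m : ℕ => Real.exp (-2 * m * (1 / 2 - L.popErr i) ^ 2)) atTop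
      (nhds 0) := by
    have hδ : -2 * (1 / 2 - L.popErr i) ^ 2 < 0 := by
      have : 0 < 1 / 2 - L.popErr i := sub_pos.2 hi
      nlinarith
    refine Real.tendsto_exp_atBot.comp ?_
    simpa only [mul_right_comm] using tendsto_natCast_atTop_atTop.const_mul_atTop_of_neg hδ
  exact squeeze_zero (fun _ => measureReal_nonneg)
    (L.measureReal_empErr_gt_half_le i hi.le) hexp

theorem J_lt_of_lt_mul_desc_sub {lam : ℝ} {m : ℕ} {i j : I}
    (hdesc : m < lam * (L.desc i - L.desc j)) (S : Fin m → X × Bool) :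
    L.J lam m j S < L.J lam m i S := by
  have hi : 0 ≤ Real.logb 2 (m.choose (L.errCount m i S)) :=
    div_nonneg (Real.log_natCast_nonneg _) (Real.log_nonneg one_le_two)
  have hj := logb_choose_le m (L.errCount m j S)
  unfold J
  linarith

variable {L} in
theorem IsMDLRule.ae_eq_of_J_lt {lam : ℝ} {m : ℕ} {A : (Fin m → X × Bool) → I}
    (hA : L.IsMDLRule lam m A) {j : I} (hJ : ∀ S, ∀ i ≠ j, L.J lam m j S < L.J lam m i S) :
    ∀ᵐ S ∂L.sampleMeasure m, L.empErr m j S ≤ 1 / 2 → A S = j := by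
  filter_upwards [hA.2] with S hS hj
  by_contra hne
  exact (hJ S (A S) hne).not_ge (hS.2 j hj)

theorem abs_expectedRisk_sub_popErr_le {m : ℕ} {A : (Fin m → X × Bool) → I}
    (hA : Measurable[_, ⊤] A) {E : Set (Fin m → X × Bool)} (hE : MeasurableSet E) {j : I}
    (hAE : ∀ᵐ S ∂L.sampleMeasure m, S ∉ E → A S = j) :
    |L.expectedRisk m A - L.popErr j| ≤ (L.sampleMeasure m).real E := by
  have hrisk : Integrable (fun S => L.popErr (A S)) (L.sampleMeasure m) :=
    Integrable.of_bound (measurable_from_top (f := L.popErr) |>.comp hA).aestronglyMeasurable 1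
      (ae_of_all _ fun S => by
        rw [Real.norm_of_nonneg (L.popErr_nonneg _)]; exact L.popErr_le_one _)
  have hle : ∀ᵐ S ∂L.sampleMeasure m, |L.popErr (A S) - L.popErr j| ≤ E.indicator 1 S := by
    filter_upwards [hAE] with S hS
    by_cases hSE : S ∈ E
    · rw [Set.indicator_of_mem hSE, Pi.one_apply, abs_sub_le_iff]
      constructor <;> linarith [L.popErr_nonneg (A S), L.popErr_le_one (A S),
        L.popErr_nonneg j, L.popErr_le_one j]
    · simp [hS hSE, hSE]
  calc |L.expectedRisk m A - L.popErr j|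
      = |∫ S, (L.popErr (A S) - L.popErr j) ∂L.sampleMeasure m| := by
        rw [integral_sub hrisk (integrable_const _), integral_const, probReal_univ, one_smul,
          expectedRisk]
    _ ≤ ∫ S, |L.popErr (A S) - L.popErr j| ∂L.sampleMeasure m :=
        abs_integral_le_integral_abs
    _ ≤ ∫ S, E.indicator 1 S ∂L.sampleMeasure m :=
        integral_mono_ae (hrisk.sub (integrable_const _)).abs
          ((integrable_const 1).indicator hE) hle
    _ = (L.sampleMeasure m).real E := integral_indicator_one hE

theorem tendsto_expectedRisk_of_desc_lt {lam : ℕ → ℝ} {A : (m : ℕ) → (Fin m → X × Bool) → I}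
    {j : I} (hj : L.popErr j < 1 / 2)
    (hdesc : ∀ᶠ m : ℕ in atTop, ∀ i ≠ j, (m : ℝ) < lam m * (L.desc i - L.desc j))
    (hA : ∀ᶠ m in atTop, L.IsMDLRule (lam m) m (A m)) :
    Tendsto (fun m => L.expectedRisk m (A m)) atTop (nhds (L.popErr j)) := by
  have hbound : ∀ᶠ m in atTop, |L.expectedRisk m (A m) - L.popErr j| ≤
      (L.sampleMeasure m).real {S | 1 / 2 < L.empErr m j S} := by
    filter_upwards [hdesc, hA] with m hm hAm
    refine L.abs_expectedRisk_sub_popErr_le hAm.1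
      (measurableSet_lt measurable_const (L.measurable_empErr m j)) ?_
    filter_upwards [hAm.ae_eq_of_J_lt fun S i hi => L.J_lt_of_lt_mul_desc_sub (hm i hi) S]
      with S hS hSE
    exact hS (not_lt.1 hSE)
  rw [tendsto_iff_norm_sub_tendsto_zero]
  exact squeeze_zero' (Eventually.of_forall fun _ => norm_nonneg _) hbound
    (L.tendsto_measureReal_empErr_gt_half j hj)

end LearningSetup

noncomputable def twoCoinSetup (a b : unitInterval) : LearningSetup (Bool × Bool) (Fin 2) where
  countable := inferInstance
  D := (Ber(true, false, a).prod Ber(true, false, b)).map (·, false)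
  isProb := Measure.isProbabilityMeasure_map Measurable.of_discrete.aemeasurable
  hyp := ![Prod.fst, Prod.snd]
  hyp_measurable _ := .of_discrete
  prior := ![1 / 10, 9 / 10]
  prior_nonneg i := by fin_cases i <;> norm_num
  prior_le_one i := by fin_cases i <;> norm_num
  prior_tsum_le_one := by
    rw [tsum_fintype, Fin.sum_univ_two, ← ENNReal.ofReal_add] <;> norm_num

namespace twoCoinSetup

variable (a b : unitInterval)

theorem popErr_zero : (twoCoinSetup a b).popErr 0 = a := by
  have hpre : (·, false) ⁻¹' {p : (Bool × Bool) × Bool | p.1.1 ≠ p.2} =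
      ({true} ×ˢ Set.univ : Set (Bool × Bool)) := by
    ext ⟨x, y⟩; cases x <;> simp
  simp only [LearningSetup.popErr, ← measureReal_def, twoCoinSetup, Matrix.cons_val_zero]
  rw [map_measureReal_apply .of_discrete .of_discrete]
  simp [hpre, measureReal_prod_prod]

theorem popErr_one : (twoCoinSetup a b).popErr 1 = b := by
  have hpre : (·, false) ⁻¹' {p : (Bool × Bool) × Bool | p.1.2 ≠ p.2} =
      (Set.univ ×ˢ {true} : Set (Bool × Bool)) := by
    ext ⟨x, y⟩; cases y <;> simp
  simp only [LearningSetup.popErr, ← measureReal_def, twoCoinSetup, Matrix.cons_val_one]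
  rw [map_measureReal_apply .of_discrete .of_discrete]
  simp [hpre, measureReal_prod_prod]

theorem desc_zero_sub_desc_one :
    (twoCoinSetup a b).desc 0 - (twoCoinSetup a b).desc 1 = Real.logb 2 9 := by
  simp only [LearningSetup.desc, twoCoinSetup, Matrix.cons_val_zero, Matrix.cons_val_one]
  rw [neg_sub_neg, ← Real.logb_div (by norm_num) (by norm_num)]
  norm_num

end twoCoinSetup

theorem mdl_overregularization_general
    (lam : ℕ → ℝ)
    (hbig : ∃ c : ℝ, 10 < c ∧ ∀ᶠ m : ℕ in atTop, c ≤ lam m / m)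
    (Lstar : ℝ) (h1 : 0 ≤ Lstar) (h2 : Lstar < 1 / 2)
    (L' : ℝ) (h3 : Lstar ≤ L') (h4 : L' < 1 / 2) :
    ∃ (X : Type) (_ : MeasurableSpace X) (L : LearningSetup X (Fin 2)),
      L.prior 0 = 1 / 10 ∧ L.prior 1 = 9 / 10 ∧
      L.popErr 0 = Lstar ∧ L.popErr 1 = L' ∧
      ∀ A : (m : ℕ) → (Fin m → X × Bool) → Fin 2,
        (∀ m : ℕ, 1 ≤ m → L.IsMDLRule (lam m) m (A m)) →
        Tendsto (fun m : ℕ => L.expectedRisk m (A m)) atTop (nhds L') := by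
  obtain ⟨c, hc, hlam⟩ := hbig
  let a : unitInterval := ⟨Lstar, h1, by linarith⟩
  let b : unitInterval := ⟨L', h1.trans h3, by linarith⟩
  refine ⟨Bool × Bool, inferInstance, twoCoinSetup a b, rfl, rfl, twoCoinSetup.popErr_zero a b,
    twoCoinSetup.popErr_one a b, fun A hA => ?_⟩
  have hdesc : ∀ᶠ m : ℕ in atTop, ∀ i ≠ 1,
      (m : ℝ) < lam m * ((twoCoinSetup a b).desc i - (twoCoinSetup a b).desc 1) := by
    filter_upwards [hlam, eventually_ge_atTop 1] with m hcm hm i hi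
    obtain rfl : i = 0 := by fin_cases i <;> simp_all
    have hm : (0 : ℝ) < m := by exact_mod_cast hm
    have hcm : c * m ≤ lam m := (le_div_iff₀ hm).1 hcm
    have h9 : 1 ≤ Real.logb 2 9 :=
      (Real.le_logb_iff_rpow_le one_lt_two (by norm_num)).2 (by norm_num)
    rw [twoCoinSetup.desc_zero_sub_desc_one]
    calc (m : ℝ) < c * m := by nlinarith
      _ ≤ lam m := hcm
      _ ≤ lam m * Real.logb 2 9 := le_mul_of_one_le_right (by nlinarith) h9
  simpa only [twoCoinSetup.popErr_one] using
    (twoCoinSetup a b).tendsto_expectedRisk_of_desc_lt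
      (by rwa [twoCoinSetup.popErr_one]) hdesc (eventually_atTop.2 ⟨1, hA⟩)

theorem mdl_overregularization
    (lam : ℕ → ℝ) (hpos : ∀ m, 0 < lam m)
    (hbig : ∃ c : ℝ, 10 < c ∧ ∀ᶠ m : ℕ in atTop, c ≤ lam m / m)
    (Lstar : ℝ) (h1 : 0 ≤ Lstar) (h2 : Lstar < 1 / 2)
    (L' : ℝ) (h3 : Lstar ≤ L') (h4 : L' < 1 / 2) :
    ∃ (X : Type) (_ : MeasurableSpace X) (L : LearningSetup X (Fin 2)),
      L.prior 0 = 1 / 10 ∧ L.prior 1 = 9 / 10 ∧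
      L.popErr 0 = Lstar ∧ L.popErr 1 = L' ∧
      ∀ A : (m : ℕ) → (Fin m → X × Bool) → Fin 2,
        (∀ m : ℕ, 1 ≤ m → L.IsMDLRule (lam m) m (A m)) →
        Tendsto (fun m : ℕ => L.expectedRisk m (A m)) atTop (nhds L') :=
  mdl_overregularization_general lam hbig Lstar h1 h2 L' h3 h4
end

section
/- For every real λ > 1 and every q ∈ (0,1/2]: H(q) < U_λ(q) + λ/(λ-1)². -/
/-!
Put `α = λ/(λ-1)`, so that `λ/(λ-1)² = α(α-1)`. The optimiser `p*_λ(q)` is the escort distribution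
`q^α / (q^α + (1-q)^α)`, and substituting it collapses `U_λ(q)` to the binary Rényi entropy
`H_α(q) = log₂(q^α + (1-q)^α) / (1-α)`.

With `t = ln((1-q)/q) ≥ 0` and `β = α - 1` one has `q^α + (1-q)^α = (1-q)^β (1 - q(1 - e^{-βt}))`,
hence, in nats, `H - H_α = q t + ln(1 - q(1 - e^{-βt})) / β ≤ q (t - (1 - e^{-βt}) / β) ≤ β q t² / 2`.
Finally `q t² ≤ 1` because `t² ≤ 1 + e^t = 1/q`, so in bits `H - H_α ≤ (α-1) / (2 ln 2) < α(α-1)`.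
-/

open MeasureTheory Filter

noncomputable def pstar (lam q : ℝ) : ℝ := 1 / (1 + ((1 - q) / q) ^ (lam / (lam - 1)))

noncomputable def Ulam (lam q : ℝ) : ℝ :=
  lam * klBin (pstar lam q) q + binEnt (pstar lam q)

open Real

noncomputable def escort (α q : ℝ) : ℝ := q ^ α / (q ^ α + (1 - q) ^ α)

noncomputable def renyiBin (α q : ℝ) : ℝ := logb 2 (q ^ α + (1 - q) ^ α) / (1 - α)

lemma exp_neg_le_one_sub_add_sq_div_two {x : ℝ} (hx : 0 ≤ x) : exp (-x) ≤ 1 - x + x ^ 2 / 2 := by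
  have hc : 0 < 1 - x + x ^ 2 / 2 := by nlinarith [sq_nonneg (x - 1)]
  rw [exp_neg, inv_le_iff_one_le_mul₀ (exp_pos x)]
  -- `(1 + x + x²/2)(1 - x + x²/2) = 1 + x⁴/4`
  nlinarith [mul_le_mul_of_nonneg_right (quadratic_le_exp_of_nonneg hx) hc.le, pow_nonneg hx 4]

lemma sq_le_one_add_exp {t : ℝ} (ht : 0 ≤ t) : t ^ 2 ≤ 1 + exp t := by
  have h := sum_le_exp_of_nonneg ht 4
  simp only [Finset.sum_range_succ, Finset.sum_range_zero, Nat.factorial] at h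
  push_cast at h
  nlinarith [mul_nonneg ht (sq_nonneg (t - 3 / 2))]

section

variable {α q : ℝ}

lemma rpow_add_one_sub_rpow_pos (hq0 : 0 < q) (hq1 : q < 1) : 0 < q ^ α + (1 - q) ^ α :=
  add_pos (rpow_pos_of_pos hq0 α) (rpow_pos_of_pos (sub_pos.2 hq1) α)

lemma rpow_add_one_sub_rpow_eq_mul (hq0 : 0 < q) (hq1 : q < 1) :
    q ^ α + (1 - q) ^ α = (1 - q) ^ (α - 1) * (1 - q * (1 - (q / (1 - q)) ^ (α - 1))) := by
  have h1q := sub_pos.2 hq1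
  rw [div_rpow hq0.le h1q.le, rpow_sub_one hq0.ne', rpow_sub_one h1q.ne']
  field_simp
  ring

lemma escort_pos (hq0 : 0 < q) (hq1 : q < 1) : 0 < escort α q :=
  div_pos (rpow_pos_of_pos hq0 α) (rpow_add_one_sub_rpow_pos hq0 hq1)

lemma one_sub_escort (hq0 : 0 < q) (hq1 : q < 1) : 1 - escort α q = escort α (1 - q) := by
  have hZ := (rpow_add_one_sub_rpow_pos (α := α) hq0 hq1).ne'
  rw [escort, escort, sub_sub_cancel, add_comm ((1 - q) ^ α), one_sub_div hZ, add_sub_cancel_left]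

lemma logb_escort (hq0 : 0 < q) (hq1 : q < 1) :
    logb 2 (escort α q) = α * logb 2 q - logb 2 (q ^ α + (1 - q) ^ α) := by
  rw [escort, logb_div (rpow_pos_of_pos hq0 α).ne' (rpow_add_one_sub_rpow_pos hq0 hq1).ne',
    logb_rpow_eq_mul_logb_of_pos hq0]

lemma logb_one_sub_escort (hq0 : 0 < q) (hq1 : q < 1) :
    logb 2 (1 - escort α q) = α * logb 2 (1 - q) - logb 2 (q ^ α + (1 - q) ^ α) := by
  rw [one_sub_escort hq0 hq1, logb_escort (sub_pos.2 hq1) (sub_lt_self 1 hq0), sub_sub_cancel,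
    add_comm]

lemma pstar_eq_escort (lam : ℝ) (hq0 : 0 < q) (hq1 : q < 1) :
    pstar lam q = escort (lam / (lam - 1)) q := by
  rw [pstar, escort, div_rpow (sub_pos.2 hq1).le hq0.le]
  field_simp

theorem Ulam_eq_renyiBin {lam : ℝ} (hlam : 1 < lam) (hq0 : 0 < q) (hq1 : q < 1) :
    Ulam lam q = renyiBin (lam / (lam - 1)) q := by
  have hs : lam - 1 ≠ 0 := (sub_pos.2 hlam).ne'
  have hp0 := (escort_pos (α := lam / (lam - 1)) hq0 hq1).ne'
  have hp1 : 1 - escort (lam / (lam - 1)) q ≠ 0 := by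
    rw [one_sub_escort hq0 hq1]
    exact (escort_pos (sub_pos.2 hq1) (sub_lt_self 1 hq0)).ne'
  rw [Ulam, pstar_eq_escort lam hq0 hq1, klBin, binEnt, renyiBin,
    logb_div hp0 hq0.ne', logb_div hp1 (sub_pos.2 hq1).ne', logb_escort hq0 hq1,
    logb_one_sub_escort hq0 hq1]
  field_simp
  ring

theorem binEnt_sub_renyiBin_mul_log_two (hα : α ≠ 1) (hq0 : 0 < q) (hq1 : q < 1) :
    (binEnt q - renyiBin α q) * log 2 =
      q * log ((1 - q) / q) + log (1 - q * (1 - (q / (1 - q)) ^ (α - 1))) / (α - 1) := by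
  have h1q := sub_pos.2 hq1
  have hZ := rpow_add_one_sub_rpow_pos (α := α) hq0 hq1
  have hW : 0 < 1 - q * (1 - (q / (1 - q)) ^ (α - 1)) := by
    rw [rpow_add_one_sub_rpow_eq_mul hq0 hq1] at hZ
    exact pos_of_mul_pos_right hZ (rpow_pos_of_pos h1q _).le
  rw [binEnt, renyiBin, logb, logb, logb, rpow_add_one_sub_rpow_eq_mul hq0 hq1,
    log_mul (rpow_pos_of_pos h1q _).ne' hW.ne', log_rpow h1q, log_div h1q.ne' hq0.ne']
  field_simp
  ring

theorem binEnt_sub_renyiBin_le (hα : 1 < α) (hq0 : 0 < q) (hq : q ≤ 1 / 2) :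
    binEnt q - renyiBin α q ≤ (α - 1) / (2 * log 2) := by
  have hq1 : q < 1 := by linarith
  have h1q := sub_pos.2 hq1
  have hβ := sub_pos.2 hα
  set β := α - 1
  set t := log ((1 - q) / q)
  have ht : 0 ≤ t := log_nonneg (by rw [le_div_iff₀ hq0]; linarith)
  have hu : (q / (1 - q)) ^ β = exp (-(β * t)) := by
    rw [rpow_def_of_pos (div_pos hq0 h1q), ← inv_div, log_inv, neg_mul, mul_comm]
  have hqt : q * t ^ 2 ≤ 1 := by
    have h := sq_le_one_add_exp ht
    rw [exp_log (div_pos h1q hq0)] at h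
    calc q * t ^ 2 ≤ q * (1 + (1 - q) / q) := mul_le_mul_of_nonneg_left h hq0.le
      _ = 1 := by field_simp; ring
  have hlog := log_le_sub_one_of_pos (x := 1 - q * (1 - exp (-(β * t))))
    (by nlinarith [exp_pos (-(β * t))])
  have hexp := exp_neg_le_one_sub_add_sq_div_two (mul_nonneg hβ.le ht)
  have key : (binEnt q - renyiBin α q) * log 2 ≤ β / 2 := by
    rw [binEnt_sub_renyiBin_mul_log_two hα.ne' hq0 hq1, hu]
    calc q * t + log (1 - q * (1 - exp (-(β * t)))) / β
        ≤ q * t + -(q * (β * t - (β * t) ^ 2 / 2)) / β := by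
          gcongr
          nlinarith
      _ = β / 2 * (q * t ^ 2) := by field_simp; ring
      _ ≤ β / 2 := mul_le_of_le_one_right (by positivity) hqt
  rw [le_div_iff₀ (by positivity)]
  linarith

end

theorem entropy_lt_Ulam_add (lam : ℝ) (hlam : 1 < lam)
    (q : ℝ) (hq0 : 0 < q) (hq : q ≤ 1 / 2) :
    binEnt q < Ulam lam q + lam / (lam - 1) ^ 2 := by
  have hs : 0 < lam - 1 := sub_pos.2 hlam
  set α := lam / (lam - 1) with hα_def
  have hα : 1 < α := by rw [lt_div_iff₀ hs]; linarith
  have hcoeff : lam / (lam - 1) ^ 2 = α * (α - 1) := by rw [hα_def]; field_simp; ring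
  have hgap : (α - 1) / (2 * log 2) < α * (α - 1) :=
    calc (α - 1) / (2 * log 2) < α - 1 :=
          div_lt_self (sub_pos.2 hα) (by linarith [log_two_gt_d9])
      _ < α * (α - 1) := lt_mul_left (sub_pos.2 hα) hα
  rw [Ulam_eq_renyiBin hlam hq0 (by linarith), hcoeff]
  linarith [binEnt_sub_renyiBin_le hα hq0 hq]
end

section
/- There exists a constant c > 0 such that for every real λ > 1, every L* ∈ (0,1/2), and every q ∈ (0,1/2) satisfying H(L*) < U_λ(q) < (1+H(L*))/2, the function U_λ is differentiable at q and its derivative satisfies U_λ'(q) ≥ min( c, log₂((1-x)/x) ), where x = 1 - 2^{-(1+H(L*))/2}; moreover log₂((1-x)/x) > (2/ln 2)·(L* - 1/2)², so that 1/U_λ'(q) ≤ max(1/c, (ln 2)/2 · (L* - 1/2)^{-2}). -/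
open MeasureTheory Filter

/-!
Write `t = (1 - q) / q` and `p = p*_λ(q)`. The odds of `p` are `(1 - p) / p = t ^ (λ / (λ - 1))`, which
turns `U_λ(q)` into `(λ - 1) log₂ (1 - p) - λ log₂ (1 - q)` and gives
`U_λ'(q) = λ (q - p) / (q (1 - q) ln 2)`. Since `(q - p) / (q (1 - p)) = 1 - t ^ (-1 / (λ - 1))` and
`1 - e^{-u} ≥ u / (1 + u)`, this is at least `min 1 (ln t) / ln 2`. As `p < q`, `U_λ(q) ≥ -log₂ (1 - q)`,
so `U_λ(q) < (1 + H(L*)) / 2` forces `q < x` and hence `t ≥ (1 - x) / x`. The bound on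
`log₂ ((1 - x) / x)` comes from the quadratic estimate `H(p) ≤ 1 - (2 / ln 2) (p - 1/2)²`, a monotonicity
argument using `ln ((1 + s) / (1 - s)) ≥ 2 s`.
-/

open Real Set

lemma two_mul_le_log_sub_log {s : ℝ} (hs₀ : 0 ≤ s) (hs₁ : s < 1) :
    2 * s ≤ log (1 + s) - log (1 - s) := by
  have h := hasSum_log_sub_log_of_abs_lt_one (abs_lt.2 ⟨by linarith, hs₁⟩)
  simpa using le_hasSum h 0 fun k _ => by positivity

lemma binEntropy_le_log_two_sub_sq {p : ℝ} (hp₀ : 0 ≤ p) (hp₁ : p ≤ 1) :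
    binEntropy p ≤ log 2 - 2 * (p - 1 / 2) ^ 2 := by
  wlog hp : p ≤ 1 / 2 generalizing p
  · have h := this (p := 1 - p) (by linarith) (by linarith) (by linarith)
    rw [binEntropy_one_sub] at h
    linarith
  have hmono : MonotoneOn (fun y => binEntropy y + 2 * (y - 1 / 2) ^ 2) (Icc 0 (1 / 2)) := by
    refine monotoneOn_of_hasDerivWithinAt_nonneg (convex_Icc _ _) (by fun_prop)
      (f' := fun y => log (1 - y) - log y + 4 * (y - 1 / 2)) (fun y hy => ?_) (fun y hy => ?_)
      <;> rw [interior_Icc] at hy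
    · have h := (hasDerivAt_binEntropy hy.1.ne' (by linarith [hy.2])).add
        ((((hasDerivAt_id y).sub_const (1 / 2)).pow 2).const_mul 2)
      exact h.hasDerivWithinAt.congr_deriv (by simp; ring)
    · have h := two_mul_le_log_sub_log (s := 1 - 2 * y) (by linarith [hy.2]) (by linarith [hy.1])
      rw [show 1 + (1 - 2 * y) = 2 * (1 - y) by ring, show 1 - (1 - 2 * y) = 2 * y by ring,
        log_mul two_ne_zero (by linarith [hy.2]), log_mul two_ne_zero hy.1.ne'] at h
      linarith
  have h := hmono ⟨hp₀, hp⟩ (right_mem_Icc.2 (by norm_num)) hp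
  dsimp only at h
  rw [sub_self, one_div, binEntropy_two_inv] at h
  linarith

lemma binEnt_eq_binEntropy_div_log_two (p : ℝ) : binEnt p = binEntropy p / log 2 := by
  simp only [binEnt, binEntropy, logb, log_inv]
  ring

lemma binEnt_nonneg {p : ℝ} (hp₀ : 0 ≤ p) (hp₁ : p ≤ 1) : 0 ≤ binEnt p := by
  rw [binEnt_eq_binEntropy_div_log_two]
  exact div_nonneg (binEntropy_nonneg hp₀ hp₁) (log_nonneg one_le_two)

lemma binEnt_le_one_sub_sq {p : ℝ} (hp₀ : 0 ≤ p) (hp₁ : p ≤ 1) :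
    binEnt p ≤ 1 - 2 / log 2 * (p - 1 / 2) ^ 2 := by
  have hlog : 0 < log 2 := log_pos one_lt_two
  rw [binEnt_eq_binEntropy_div_log_two, div_le_iff₀ hlog]
  calc binEntropy p ≤ log 2 - 2 * (p - 1 / 2) ^ 2 := binEntropy_le_log_two_sub_sq hp₀ hp₁
    _ = (1 - 2 / log 2 * (p - 1 / 2) ^ 2) * log 2 := by field_simp

lemma one_sub_div_self_le_of_le {a b : ℝ} (ha : 0 < a) (hab : a ≤ b) :
    (1 - b) / b ≤ (1 - a) / a := by
  rw [sub_div, sub_div, div_self (ha.trans_le hab).ne', div_self ha.ne']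
  gcongr

lemma two_mul_lt_logb_odds {ε y x : ℝ} (hε : 0 < ε) (hy : 0 < y) (hyε : y ≤ 1 - ε)
    (hx : x = 1 - 2 ^ (-y)) : 2 * ε < logb 2 ((1 - x) / x) := by
  subst hx
  set B : ℝ := 2 ^ (-y)
  set z : ℝ := 2 ^ ε
  have hB₁ : B < 1 := rpow_lt_one_of_one_lt_of_neg one_lt_two (by linarith)
  have hz₁ : 1 < z := one_lt_rpow one_lt_two hε
  have hzB : z / 2 ≤ B := by
    calc z / 2 = 2 ^ (ε - 1) := by rw [rpow_sub_one two_ne_zero]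
      _ ≤ B := rpow_le_rpow_of_exponent_le one_le_two (by linarith)
  -- `B / (1 - B) ≥ z / (2 - z) > z ^ 2`, the last step being `z (z - 1) ^ 2 > 0`
  have hodds : z * z < B / (1 - B) := by
    rw [lt_div_iff₀ (by linarith)]
    nlinarith [mul_pos (by linarith : (0 : ℝ) < z) (pow_pos (sub_pos.2 hz₁) 2)]
  rw [sub_sub_cancel, lt_logb_iff_rpow_lt one_lt_two (div_pos (by positivity) (by linarith)),
    two_mul, rpow_add two_pos]
  exact hodds

lemma min_one_le_mul_one_sub_exp {lam l : ℝ} (hlam : 1 < lam) (hl : 0 ≤ l) :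
    min 1 l ≤ lam * (1 - exp (-(l / (lam - 1)))) := by
  have hm : 0 < lam - 1 := by linarith
  have hexp : exp (-(l / (lam - 1))) ≤ (lam - 1) / (lam - 1 + l) := by
    rw [exp_neg, inv_le_comm₀ (exp_pos _) (by positivity), inv_div]
    calc (lam - 1 + l) / (lam - 1) = l / (lam - 1) + 1 := by field_simp; ring
      _ ≤ exp (l / (lam - 1)) := add_one_le_exp _
  calc min 1 l ≤ lam * l / (lam - 1 + l) := by
        rw [le_div_iff₀ (by positivity)]
        rcases min_cases 1 l with ⟨h, _⟩ | ⟨h, _⟩ <;> rw [h] <;> nlinarith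
    _ = lam * (1 - (lam - 1) / (lam - 1 + l)) := by field_simp; ring
    _ ≤ lam * (1 - exp (-(l / (lam - 1)))) := by gcongr

lemma one_div_le_max_one_div {c a b D : ℝ} (hc : 0 < c) (hb : 0 < b) (hba : b ≤ a)
    (hD : min c a ≤ D) : 1 / D ≤ max (1 / c) (1 / b) := by
  have hcb : 0 < min c b := lt_min hc hb
  calc 1 / D ≤ 1 / min c b :=
        one_div_le_one_div_of_le hcb ((min_le_min_left c hba).trans hD)
    _ = max (1 / c) (1 / b) := by
        rcases min_cases c b with ⟨h, hle⟩ | ⟨h, hlt⟩ <;> rw [h]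
        · exact (max_eq_left (one_div_le_one_div_of_le hc hle)).symm
        · exact (max_eq_right (one_div_le_one_div_of_le hb hlt.le)).symm

section Ulam

variable {lam q : ℝ}

lemma odds_rpow_pos (hq₀ : 0 < q) (hq₁ : q < 1) : 0 < ((1 - q) / q) ^ (lam / (lam - 1)) :=
  rpow_pos_of_pos (div_pos (by linarith) hq₀) _

lemma pstar_pos (hq₀ : 0 < q) (hq₁ : q < 1) : 0 < pstar lam q := by
  have hR := odds_rpow_pos (lam := lam) hq₀ hq₁
  unfold pstar
  positivity

lemma pstar_lt_one (hq₀ : 0 < q) (hq₁ : q < 1) : pstar lam q < 1 := by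
  have hR := odds_rpow_pos (lam := lam) hq₀ hq₁
  rw [pstar, div_lt_one (by linarith)]
  linarith

lemma one_sub_pstar_div_pstar (hq₀ : 0 < q) (hq₁ : q < 1) :
    (1 - pstar lam q) / pstar lam q = ((1 - q) / q) ^ (lam / (lam - 1)) := by
  have hR := odds_rpow_pos (lam := lam) hq₀ hq₁
  rw [pstar]
  field_simp
  ring

lemma pstar_lt_self (hlam : 1 < lam) (hq₀ : 0 < q) (hq : q < 1 / 2) : pstar lam q < q := by
  have hp₀ := pstar_pos (lam := lam) hq₀ (by linarith)
  have ht : 1 < (1 - q) / q := by rw [lt_div_iff₀ hq₀]; linarith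
  have hκ : 1 < lam / (lam - 1) := by rw [lt_div_iff₀ (by linarith)]; linarith
  have hodds : (1 - q) / q < (1 - pstar lam q) / pstar lam q := by
    rw [one_sub_pstar_div_pstar hq₀ (by linarith)]
    simpa using rpow_lt_rpow_of_exponent_lt ht hκ
  rw [sub_div, sub_div, div_self hq₀.ne', div_self hp₀.ne'] at hodds
  exact (one_div_lt_one_div hq₀ hp₀).1 (by linarith)

lemma Ulam_eq (hlam : lam ≠ 1) (hq₀ : 0 < q) (hq₁ : q < 1) :
    Ulam lam q = (lam - 1) * logb 2 (1 - pstar lam q) - lam * logb 2 (1 - q) := by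
  have hp₀ := pstar_pos (lam := lam) hq₀ hq₁
  have hp₁ := pstar_lt_one (lam := lam) hq₀ hq₁
  have hlog := congrArg log (one_sub_pstar_div_pstar (lam := lam) hq₀ hq₁)
  rw [log_rpow (div_pos (by linarith) hq₀), log_div (by linarith) hp₀.ne',
    log_div (by linarith) hq₀.ne'] at hlog
  have hlam' : lam - 1 ≠ 0 := sub_ne_zero.2 hlam
  have hlog' : (lam - 1) * (log (1 - pstar lam q) - log (pstar lam q)) =
      lam * (log (1 - q) - log q) := by
    rw [hlog]; field_simp
  rw [Ulam, klBin, binEnt]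
  simp only [logb]
  rw [log_div hp₀.ne' hq₀.ne', log_div (by linarith) (by linarith)]
  field_simp
  linear_combination (-pstar lam q) * hlog'

lemma hasDerivAt_pstar (hq₀ : 0 < q) (hq₁ : q < 1) :
    HasDerivAt (pstar lam)
      (lam / (lam - 1) * pstar lam q * (1 - pstar lam q) / (q * (1 - q))) q := by
  have ht : 0 < (1 - q) / q := div_pos (by linarith) hq₀
  have hR := odds_rpow_pos (lam := lam) hq₀ hq₁
  have hodds : HasDerivAt (fun y => (1 - y) / y) ((-1 * q - (1 - q) * 1) / q ^ 2) q :=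
    ((hasDerivAt_id q).const_sub 1).div (hasDerivAt_id q) hq₀.ne'
  have h := (hasDerivAt_const q (1 : ℝ)).div
    ((hodds.rpow_const (p := lam / (lam - 1)) (Or.inl ht.ne')).const_add 1) (by positivity)
  refine h.congr_deriv ?_
  rw [pstar, rpow_sub_one ht.ne']
  field_simp
  ring

lemma hasDerivAt_Ulam (hlam : lam ≠ 1) (hq₀ : 0 < q) (hq₁ : q < 1) :
    HasDerivAt (Ulam lam) (lam * (q - pstar lam q) / (q * (1 - q) * log 2)) q := by
  have hp₁ := pstar_lt_one (lam := lam) hq₀ hq₁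
  have hlog_p := ((hasDerivAt_pstar (lam := lam) hq₀ hq₁).const_sub 1).log (by linarith)
  have hlog_q := ((hasDerivAt_id' q).const_sub 1).log (by linarith)
  have h := ((hlog_p.div_const (log 2)).const_mul (lam - 1)).sub
    ((hlog_q.div_const (log 2)).const_mul lam)
  have hEq : (fun y => (lam - 1) * (log (1 - pstar lam y) / log 2) -
      lam * (log (1 - y) / log 2)) =ᶠ[nhds q] Ulam lam := by
    filter_upwards [Ioo_mem_nhds hq₀ hq₁] with y hy
    rw [Ulam_eq hlam hy.1 hy.2]
    rfl
  refine (h.congr_of_eventuallyEq hEq.symm).congr_deriv ?_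
  have hlog2 : log 2 ≠ 0 := (log_pos one_lt_two).ne'
  have hlam' : lam - 1 ≠ 0 := sub_ne_zero.2 hlam
  have hp₁' : 1 - pstar lam q ≠ 0 := by linarith
  field_simp
  ring

lemma neg_logb_one_sub_le_Ulam (hlam : 1 < lam) (hq₀ : 0 < q) (hq : q < 1 / 2) :
    -logb 2 (1 - q) ≤ Ulam lam q := by
  have hp := pstar_lt_self hlam hq₀ hq
  have hlogb : logb 2 (1 - q) ≤ logb 2 (1 - pstar lam q) :=
    logb_le_logb_of_le one_lt_two (by linarith) (by linarith)
  rw [Ulam_eq hlam.ne' hq₀ (by linarith)]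
  nlinarith

lemma lt_one_sub_rpow_of_Ulam_lt {y : ℝ} (hlam : 1 < lam) (hq₀ : 0 < q) (hq : q < 1 / 2)
    (hU : Ulam lam q < y) : q < 1 - 2 ^ (-y) := by
  have h := (neg_logb_one_sub_le_Ulam hlam hq₀ hq).trans_lt hU
  have : 2 ^ (-y) < 1 - q := (lt_logb_iff_rpow_lt one_lt_two (by linarith)).1 (by linarith)
  linarith

lemma sub_pstar_div_eq (hlam : lam ≠ 1) (hq₀ : 0 < q) (hq₁ : q < 1) :
    (q - pstar lam q) / (q * (1 - pstar lam q)) =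
      1 - exp (-(log ((1 - q) / q) / (lam - 1))) := by
  have hp₁ := pstar_lt_one (lam := lam) hq₀ hq₁
  have ht : 0 < (1 - q) / q := div_pos (by linarith) hq₀
  have hlam' : lam - 1 ≠ 0 := sub_ne_zero.2 hlam
  calc (q - pstar lam q) / (q * (1 - pstar lam q))
        = 1 - (1 - q) / q / ((1 - pstar lam q) / pstar lam q) := by
          field_simp [show 1 - pstar lam q ≠ 0 by linarith]
          ring
    _ = 1 - exp (log ((1 - q) / q)) / exp (log ((1 - q) / q) * (lam / (lam - 1))) := by
          rw [one_sub_pstar_div_pstar hq₀ hq₁, rpow_def_of_pos ht, exp_log ht]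
    _ = 1 - exp (-(log ((1 - q) / q) / (lam - 1))) := by
          rw [← exp_sub]
          congr 2
          field_simp
          ring

lemma min_le_deriv_Ulam (hlam : 1 < lam) (hq₀ : 0 < q) (hq : q < 1 / 2) :
    min (1 / log 2) (logb 2 ((1 - q) / q)) ≤ deriv (Ulam lam) q := by
  have hq₁ : q < 1 := by linarith
  have hp := pstar_lt_self hlam hq₀ hq
  have hl : 0 ≤ log ((1 - q) / q) := log_nonneg (by rw [le_div_iff₀ hq₀]; linarith)
  rw [(hasDerivAt_Ulam hlam.ne' hq₀ hq₁).deriv, logb, min_div_div_right (log_pos one_lt_two).le,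
    ← div_div]
  gcongr
  calc min 1 (log ((1 - q) / q)) ≤ lam * (1 - exp (-(log ((1 - q) / q) / (lam - 1)))) :=
        min_one_le_mul_one_sub_exp hlam hl
    _ = lam * ((q - pstar lam q) / (q * (1 - pstar lam q))) := by
        rw [sub_pstar_div_eq hlam.ne' hq₀ hq₁]
    _ ≤ lam * (q - pstar lam q) / (q * (1 - q)) := by
        rw [mul_div_assoc]
        gcongr

end Ulam

theorem Ulam_deriv_lower_bound :
    ∃ c : ℝ, 0 < c ∧
      ∀ (lam : ℝ), 1 < lam →
      ∀ (Lstar : ℝ), 0 < Lstar → Lstar < 1 / 2 →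
      ∀ (q : ℝ), 0 < q → q < 1 / 2 →
        binEnt Lstar < Ulam lam q → Ulam lam q < (1 + binEnt Lstar) / 2 →
      ∀ (x : ℝ), x = 1 - (2 : ℝ) ^ (-(1 + binEnt Lstar) / 2) →
        DifferentiableAt ℝ (Ulam lam) q ∧
        min c (Real.logb 2 ((1 - x) / x)) ≤ deriv (Ulam lam) q ∧
        (2 / Real.log 2) * (Lstar - 1 / 2) ^ 2 < Real.logb 2 ((1 - x) / x) ∧
        1 / deriv (Ulam lam) q ≤ max (1 / c) (Real.log 2 / 2 * ((Lstar - 1 / 2) ^ 2)⁻¹) := by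
  have hlog2 : 0 < log 2 := log_pos one_lt_two
  refine ⟨1 / log 2, by positivity, fun lam hlam L hL₀ hL q hq₀ hq _ hU x hx => ?_⟩
  rw [neg_div] at hx
  have hH₀ : 0 ≤ binEnt L := binEnt_nonneg hL₀.le (by linarith)
  have hqx : q < x := hx ▸ lt_one_sub_rpow_of_Ulam_lt hlam hq₀ hq hU
  have hd : 0 < (L - 1 / 2) ^ 2 := sq_pos_of_ne_zero (sub_ne_zero.2 hL.ne)
  have hε : 0 < (L - 1 / 2) ^ 2 / log 2 := div_pos hd hlog2
  have h2ε : 2 / log 2 * (L - 1 / 2) ^ 2 = 2 * ((L - 1 / 2) ^ 2 / log 2) := by ring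
  have hodds : 2 / log 2 * (L - 1 / 2) ^ 2 < logb 2 ((1 - x) / x) := by
    rw [h2ε]
    refine two_mul_lt_logb_odds hε (by positivity) ?_ hx
    linarith [binEnt_le_one_sub_sq hL₀.le (by linarith : L ≤ 1)]
  have hx₁ : 0 < 1 - x := by rw [hx, sub_sub_cancel]; positivity
  have hderiv : min (1 / log 2) (logb 2 ((1 - x) / x)) ≤ deriv (Ulam lam) q := by
    calc min (1 / log 2) (logb 2 ((1 - x) / x))
        ≤ min (1 / log 2) (logb 2 ((1 - q) / q)) :=
          min_le_min_left _ (logb_le_logb_of_le one_lt_two (div_pos hx₁ (hq₀.trans hqx))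
            (one_sub_div_self_le_of_le hq₀ hqx.le))
      _ ≤ deriv (Ulam lam) q := min_le_deriv_Ulam hlam hq₀ hq
  refine ⟨(hasDerivAt_Ulam hlam.ne' hq₀ (by linarith)).differentiableAt, hderiv, hodds, ?_⟩
  convert one_div_le_max_one_div (by positivity) (by positivity) hodds.le hderiv using 2
  field_simp
end

section
/- Let n ≥ 1 be an integer, p ∈ (0,1), and let X be a Binomial(n,p) random variable. Then for every real a with 0 ≤ a ≤ p: | log₂ P(X ≤ n·a) + n·KL(a‖p) | ≤ 4·log₂(n+1) + max(0, log₂(p/(1-p))). -/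
/-!
Work in nats, with `D(a‖p) = klNat a p`. For `x = k / n` one has
`p^k (1-p)^(n-k) = exp (-n D(x‖p)) x^k (1-x)^(n-k)`, so each term of the tail is
`exp (-n D(k/n‖p))` times a `Binomial(n, k/n)` probability. These probabilities are at most `1`
and `D(·‖p)` decreases on `[0, p]`, so the tail is at most `(n + 1) exp (-n D(a‖p))`.
Conversely, for `m = ⌊n a⌋` the outcome `m` is a mode of `Binomial(n, m/n)`, hence has probability
at least `1/(n+1)`, and the tail is at least `exp (-n D(m/n‖p)) / (n + 1)`. Since
`0 ≤ a - m/n ≤ 1/n`, subadditivity of `negMulLog` together with `n negMulLog δ ≤ log n + 1` for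
`δ ≤ 1/n` gives `n (D(m/n‖p) - D(a‖p)) ≤ log n + 2 + max 0 (log (p/(1-p)))`.
-/

open MeasureTheory Filter

open Real Finset

noncomputable def binomialPMF (n : ℕ) (p : ℝ) (k : ℕ) : ℝ :=
  n.choose k * p ^ k * (1 - p) ^ (n - k)

noncomputable def binomialCDF (n : ℕ) (p t : ℝ) : ℝ :=
  ∑ k ∈ range (n + 1), if (k : ℝ) ≤ t then binomialPMF n p k else 0

noncomputable def klNat (a b : ℝ) : ℝ :=
  a * log (a / b) + (1 - a) * log ((1 - a) / (1 - b))

namespace binomialPMF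

variable (n : ℕ) {p : ℝ}

theorem sum_eq_one (p : ℝ) : ∑ k ∈ range (n + 1), binomialPMF n p k = 1 := by
  have h := (add_pow p (1 - p) n).symm
  rw [add_sub_cancel, one_pow] at h
  rw [← h]
  exact sum_congr rfl fun k _ => by unfold binomialPMF; ring

theorem nonneg (hp0 : 0 ≤ p) (hp1 : p ≤ 1) (k : ℕ) : 0 ≤ binomialPMF n p k := by
  have := sub_nonneg.2 hp1
  unfold binomialPMF
  positivity

theorem le_one (hp0 : 0 ≤ p) (hp1 : p ≤ 1) {k : ℕ} (hk : k ≤ n) : binomialPMF n p k ≤ 1 :=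
  sum_eq_one n p ▸ single_le_sum (fun i _ => nonneg n hp0 hp1 i) (mem_range.2 (by omega))

theorem succ_mul (p : ℝ) {k : ℕ} (hk : k < n) :
    binomialPMF n p (k + 1) * ((k + 1) * (1 - p)) = binomialPMF n p k * ((n - k : ℕ) * p) := by
  have hc : (n.choose (k + 1) : ℝ) * (k + 1) = n.choose k * (n - k : ℕ) := by
    exact_mod_cast Nat.choose_succ_right_eq n k
  unfold binomialPMF
  rw [show (1 - p) ^ (n - k) = (1 - p) ^ (n - (k + 1)) * (1 - p) by
    rw [← pow_succ]; congr 1; omega, pow_succ]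
  linear_combination (p ^ k * p * (1 - p) ^ (n - (k + 1)) * (1 - p)) * hc

theorem le_succ (hp1 : p < 1) {k : ℕ} (hk : k < n) (hkp : k + 1 ≤ (n + 1) * p) :
    binomialPMF n p k ≤ binomialPMF n p (k + 1) := by
  have hp0 : 0 < p := by
    by_contra! h
    nlinarith
  have hnk : (0 : ℝ) < (n - k : ℕ) := by exact_mod_cast Nat.sub_pos_of_lt hk
  have hratio : (k + 1) * (1 - p) ≤ (n - k : ℕ) * p := by
    rw [Nat.cast_sub hk.le]
    linarith
  refine le_of_mul_le_mul_right ?_ (mul_pos hnk hp0)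
  rw [← succ_mul n p hk]
  exact mul_le_mul_of_nonneg_left hratio (nonneg n hp0.le hp1.le _)

theorem succ_le (hp0 : 0 ≤ p) (hp1 : p < 1) {k : ℕ} (hkp : (n + 1) * p ≤ k + 1) :
    binomialPMF n p (k + 1) ≤ binomialPMF n p k := by
  rcases lt_or_ge k n with hk | hk
  · have hratio : (n - k : ℕ) * p ≤ (k + 1) * (1 - p) := by
      rw [Nat.cast_sub hk.le]
      linarith
    refine le_of_mul_le_mul_right ?_ (by nlinarith : (0 : ℝ) < (k + 1) * (1 - p))
    rw [succ_mul n p hk]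
    exact mul_le_mul_of_nonneg_left hratio (nonneg n hp0 hp1.le _)
  · simp only [binomialPMF, Nat.choose_eq_zero_of_lt (Nat.lt_succ_of_le hk), Nat.cast_zero,
      zero_mul]
    exact nonneg n hp0 hp1.le _

theorem le_mode (hp0 : 0 ≤ p) (hp1 : p < 1) {m : ℕ} (hm : m ≤ (n + 1) * p)
    (hm' : (n + 1) * p ≤ m + 1) (k : ℕ) :
    binomialPMF n p k ≤ binomialPMF n p m := by
  rcases le_total k m with hkm | hmk
  · have hmn : m ≤ n := by
      have : (m : ℝ) < n + 1 := by nlinarith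
      exact_mod_cast Nat.lt_succ_iff.1 (by exact_mod_cast this)
    refine monotoneOn_of_le_add_one Set.ordConnected_Iic (fun i _ _ hi => ?_) hkm le_rfl hkm
    have hi : i + 1 ≤ m := hi
    have hi' : (i : ℝ) + 1 ≤ m := by exact_mod_cast hi
    exact le_succ n hp1 (by omega) (by linarith)
  · refine antitoneOn_of_add_one_le Set.ordConnected_Ici (fun i _ hi _ => ?_) le_rfl hmk hmk
    have hi : (m : ℝ) ≤ i := by exact_mod_cast Set.mem_Ici.1 hi
    exact succ_le n hp0 hp1 (by linarith)

theorem inv_succ_le_mode (hp0 : 0 ≤ p) (hp1 : p < 1) {m : ℕ} (hm : m ≤ (n + 1) * p)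
    (hm' : (n + 1) * p ≤ m + 1) : ((n : ℝ) + 1)⁻¹ ≤ binomialPMF n p m := by
  have hsum : (1 : ℝ) ≤ (n + 1) * binomialPMF n p m := by
    calc (1 : ℝ) = ∑ k ∈ range (n + 1), binomialPMF n p k := (sum_eq_one n p).symm
      _ ≤ ∑ _k ∈ range (n + 1), binomialPMF n p m :=
        sum_le_sum fun k _ => le_mode n hp0 hp1 hm hm' k
      _ = (n + 1) * binomialPMF n p m := by simp
  rwa [inv_le_iff_one_le_mul₀' (by positivity)]

end binomialPMF

theorem mul_log_div_eq (a : ℝ) {b : ℝ} (hb : b ≠ 0) : a * log (a / b) = a * log a - a * log b := by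
  rcases eq_or_ne a 0 with rfl | ha
  · simp
  · rw [log_div ha hb, mul_sub]

theorem klNat_eq {p : ℝ} (hp0 : p ≠ 0) (hp1 : p ≠ 1) (a : ℝ) :
    klNat a p = -binEntropy a - a * log p - (1 - a) * log (1 - p) := by
  rw [klNat, mul_log_div_eq a hp0, mul_log_div_eq (1 - a) (sub_ne_zero.2 hp1.symm),
    binEntropy_eq_negMulLog_add_negMulLog_one_sub, negMulLog, negMulLog]
  ring

theorem klNat_antitoneOn {p : ℝ} (hp0 : 0 < p) (hp1 : p < 1) :
    AntitoneOn (klNat · p) (Set.Icc 0 p) := by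
  have hderiv : ∀ t ∈ Set.Ioo 0 p, HasDerivAt (klNat · p)
      (-(log (1 - t) - log t) - log p + log (1 - p)) t := by
    intro t ⟨ht0, htp⟩
    simp_rw [klNat_eq hp0.ne' hp1.ne]
    exact (((hasDerivAt_binEntropy ht0.ne' (by linarith)).neg.sub (hasDerivAt_mul_const _)).sub
      (((hasDerivAt_id t).const_sub 1).mul_const _)).congr_deriv (by ring)
  refine antitoneOn_of_deriv_nonpos (convex_Icc 0 p) ?_ ?_ ?_
  · simp_rw [klNat_eq hp0.ne' hp1.ne]
    fun_prop
  · rw [interior_Icc]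
    exact fun t ht => (hderiv t ht).differentiableAt.differentiableWithinAt
  · rw [interior_Icc]
    intro t ht
    rw [(hderiv t ht).deriv]
    have h1 : log t ≤ log p := log_le_log ht.1 ht.2.le
    have h2 : log (1 - p) ≤ log (1 - t) := log_le_log (by linarith) (by linarith [ht.2])
    linarith

theorem pow_eq_exp_mul_log {y : ℝ} (hy : 0 ≤ y) {k : ℕ} (hk : y = 0 → k = 0) :
    y ^ k = exp (k * log y) := by
  rcases hy.eq_or_lt with rfl | hy
  · simp [hk rfl]
  · rw [exp_nat_mul, exp_log hy]

theorem binomialPMF_eq_exp_mul {n k : ℕ} (hn : 0 < n) (hk : k ≤ n) {p : ℝ} (hp0 : 0 < p)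
    (hp1 : p < 1) :
    binomialPMF n p k = exp (-(n * klNat (k / n) p)) * binomialPMF n (k / n) k := by
  set x : ℝ := k / n with hx
  clear_value x
  have hn' : (n : ℝ) ≠ 0 := by positivity
  have hnx : n * x = k := hx ▸ mul_div_cancel₀ _ hn'
  have hn1x : n * (1 - x) = (n - k : ℕ) := by rw [Nat.cast_sub hk]; linear_combination -hnx
  have hx0 : 0 ≤ x := by rw [hx]; positivity
  have hx1 : 0 ≤ 1 - x := by
    rw [hx, sub_nonneg, div_le_one (by positivity)]; exact_mod_cast hk
  have hexp : k * log p + (n - k : ℕ) * log (1 - p)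
      = -(n * klNat x p) + (k * log x + (n - k : ℕ) * log (1 - x)) := by
    rw [klNat_eq hp0.ne' hp1.ne, binEntropy_eq_negMulLog_add_negMulLog_one_sub, negMulLog,
      negMulLog]
    linear_combination (log x - log p) * hnx + (log (1 - x) - log (1 - p)) * hn1x
  unfold binomialPMF
  rw [pow_eq_exp_mul_log hp0.le (by intro h; exact absurd h hp0.ne'),
    pow_eq_exp_mul_log (sub_pos.2 hp1).le (by intro h; linarith),
    pow_eq_exp_mul_log hx0 (by intro h; exact_mod_cast (by simpa [h] using hnx.symm)),
    pow_eq_exp_mul_log hx1 (by intro h; exact_mod_cast (by simpa [h] using hn1x.symm)),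
    mul_assoc, ← exp_add, hexp, exp_add, exp_add]
  ring

theorem negMulLog_add_le {x y : ℝ} (hx : 0 ≤ x) (hy : 0 ≤ y) :
    negMulLog (x + y) ≤ negMulLog x + negMulLog y := by
  have hmono : ∀ {u v : ℝ}, 0 ≤ u → u ≤ v → u * log u ≤ u * log v := fun {u v} hu huv => by
    rcases hu.eq_or_lt with rfl | hu
    · simp
    · exact mul_le_mul_of_nonneg_left (log_le_log hu huv) hu.le
  have h1 := hmono hx (le_add_of_nonneg_right hy)
  have h2 := hmono hy (le_add_of_nonneg_left hx)
  simp only [negMulLog]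
  linarith

theorem mul_negMulLog_le {n δ : ℝ} (hn : 1 ≤ n) (hδ : 0 ≤ δ) (hnδ : n * δ ≤ 1) :
    n * negMulLog δ ≤ log n + 1 := by
  have hmul := negMulLog_mul δ n
  have h1 := negMulLog_le_one_sub_self (mul_nonneg hδ (zero_le_one.trans hn))
  have h2 : 0 ≤ (1 - n * δ) * log n := mul_nonneg (by linarith) (log_nonneg hn)
  simp only [negMulLog] at hmul h1 ⊢
  nlinarith

theorem negMulLog_sub_negMulLog_le {u v : ℝ} (hu : 0 ≤ u) (huv : u ≤ v) (hv : v ≤ 1) :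
    negMulLog u - negMulLog v ≤ v - u := by
  rcases (hu.trans huv).eq_or_lt with hv0 | hv0
  · obtain rfl : u = 0 := by linarith
    simp [← hv0]
  · -- `negMulLog u = v * negMulLog (u / v) + (u / v) * negMulLog v`
    have hmul := negMulLog_mul (u / v) v
    rw [div_mul_cancel₀ _ hv0.ne'] at hmul
    have h1 : v * negMulLog (u / v) ≤ v - u := by
      calc v * negMulLog (u / v) ≤ v * (1 - u / v) :=
            mul_le_mul_of_nonneg_left (negMulLog_le_one_sub_self (by positivity)) hv0.le
        _ = v - u := by field_simp
    have h2 : (u / v - 1) * negMulLog v ≤ 0 :=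
      mul_nonpos_of_nonpos_of_nonneg (by rw [sub_nonpos]; exact div_le_one_of_le₀ huv hv0.le)
        (negMulLog_nonneg hv0.le hv)
    linarith

theorem mul_binEntropy_sub_le {n x a : ℝ} (hn : 1 ≤ n) (hx : 0 ≤ x) (hxa : x ≤ a) (ha : a ≤ 1)
    (hnax : n * (a - x) ≤ 1) : n * (binEntropy a - binEntropy x) ≤ log n + 2 := by
  have h1 : negMulLog a ≤ negMulLog x + negMulLog (a - x) := by
    simpa using negMulLog_add_le hx (sub_nonneg.2 hxa)
  have h2 := negMulLog_sub_negMulLog_le (u := 1 - a) (v := 1 - x) (by linarith) (by linarith)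
    (by linarith)
  have h3 := mul_negMulLog_le hn (sub_nonneg.2 hxa) hnax
  have h4 := mul_le_mul_of_nonneg_left (add_le_add h1 h2) (zero_le_one.trans hn)
  rw [binEntropy_eq_negMulLog_add_negMulLog_one_sub, binEntropy_eq_negMulLog_add_negMulLog_one_sub]
  linarith

theorem klNat_sub_klNat {p : ℝ} (hp0 : p ≠ 0) (hp1 : p ≠ 1) (x a : ℝ) :
    klNat x p - klNat a p = binEntropy a - binEntropy x + (a - x) * log (p / (1 - p)) := by
  rw [klNat_eq hp0 hp1, klNat_eq hp0 hp1, log_div hp0 (sub_ne_zero.2 hp1.symm)]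
  ring

theorem mul_klNat_sub_le {n p x a : ℝ} (hn : 1 ≤ n) (hp0 : p ≠ 0) (hp1 : p ≠ 1) (hx : 0 ≤ x)
    (hxa : x ≤ a) (ha : a ≤ 1) (hnax : n * (a - x) ≤ 1) :
    n * (klNat x p - klNat a p) ≤ log n + 2 + max 0 (log (p / (1 - p))) := by
  have hmax : n * (a - x) * log (p / (1 - p)) ≤ max 0 (log (p / (1 - p))) :=
    calc n * (a - x) * log (p / (1 - p)) ≤ n * (a - x) * max 0 (log (p / (1 - p))) :=
          mul_le_mul_of_nonneg_left (le_max_right _ _)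
            (mul_nonneg (zero_le_one.trans hn) (sub_nonneg.2 hxa))
      _ ≤ max 0 (log (p / (1 - p))) := mul_le_of_le_one_left (le_max_left _ _) hnax
  rw [klNat_sub_klNat hp0 hp1, mul_add, ← mul_assoc]
  exact add_le_add (mul_binEntropy_sub_le hn hx hxa ha hnax) hmax

theorem log_add_two_le_three_mul_log_succ {n : ℕ} (hn : 1 ≤ n) :
    log n + 2 ≤ 3 * log (n + 1) := by
  rcases hn.eq_or_lt with rfl | hn2
  · norm_num
    linarith [log_two_gt_d9]
  · have h2 : (2 : ℝ) ≤ n := by exact_mod_cast hn2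
    have h1 : 1 ≤ log (n + 1) := by
      rw [le_log_iff_exp_le (by positivity)]
      linarith [exp_one_lt_d9]
    have := log_le_log (by positivity) (by linarith : (n : ℝ) ≤ n + 1)
    linarith

theorem binomialCDF_le {n : ℕ} (hn : 0 < n) {p a : ℝ} (hp0 : 0 < p) (hp1 : p < 1) (ha0 : 0 ≤ a)
    (hap : a ≤ p) : binomialCDF n p (n * a) ≤ (n + 1) * exp (-(n * klNat a p)) := by
  have hterm : ∀ k ∈ range (n + 1),
      (if (k : ℝ) ≤ n * a then binomialPMF n p k else 0) ≤ exp (-(n * klNat a p)) := by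
    intro k hk
    split_ifs with hka
    · have hkn : k ≤ n := Nat.lt_succ_iff.1 (mem_range.1 hk)
      have hxa : (k : ℝ) / n ≤ a := by rw [div_le_iff₀ (by positivity)]; linarith
      have hx1 : (k : ℝ) / n ≤ 1 := div_le_one_of_le₀ (by exact_mod_cast hkn) (by positivity)
      have hkl : klNat a p ≤ klNat (k / n) p :=
        klNat_antitoneOn hp0 hp1 ⟨by positivity, hxa.trans hap⟩ ⟨ha0, hap⟩ hxa
      rw [binomialPMF_eq_exp_mul hn hkn hp0 hp1]
      calc _ ≤ exp (-(n * klNat (k / n) p)) * 1 := mul_le_mul_of_nonneg_left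
            (binomialPMF.le_one n (by positivity) hx1 hkn) (exp_pos _).le
        _ ≤ exp (-(n * klNat a p)) := by
          rw [mul_one, exp_le_exp, neg_le_neg_iff]
          exact mul_le_mul_of_nonneg_left hkl (by positivity)
    · positivity
  calc binomialCDF n p (n * a) ≤ #(range (n + 1)) • exp (-(n * klNat a p)) :=
        sum_le_card_nsmul _ _ _ hterm
    _ = (n + 1) * exp (-(n * klNat a p)) := by simp [nsmul_eq_mul]

theorem exp_neg_mul_klNat_div_le_binomialCDF {n m : ℕ} (hmn : m < n) {p t : ℝ} (hp0 : 0 < p)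
    (hp1 : p < 1) (hmt : (m : ℝ) ≤ t) :
    exp (-(n * klNat (m / n) p)) / (n + 1) ≤ binomialCDF n p t := by
  have hn : 0 < n := by omega
  have hn' : (0 : ℝ) < n := by exact_mod_cast hn
  have hx1 : (m : ℝ) / n ≤ 1 := div_le_one_of_le₀ (by exact_mod_cast hmn.le) hn'.le
  have hmode : ((n : ℝ) + 1) * (m / n) = m + m / n := by field_simp
  have hinv := binomialPMF.inv_succ_le_mode n (p := m / n) (by positivity)
    ((div_lt_one hn').2 (by exact_mod_cast hmn)) (m := m)
    (by rw [hmode]; exact le_add_of_nonneg_right (by positivity))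
    (by rw [hmode]; linarith)
  have hterm : binomialPMF n p m ≤ binomialCDF n p t := by
    have := single_le_sum (f := fun k : ℕ => if (k : ℝ) ≤ t then binomialPMF n p k else 0)
      (fun k _ => by split_ifs <;> first | exact binomialPMF.nonneg n hp0.le hp1.le k | rfl)
      (mem_range.2 (Nat.lt_succ_of_lt hmn))
    rwa [if_pos hmt] at this
  calc exp (-(n * klNat (m / n) p)) / (n + 1)
      = exp (-(n * klNat (m / n) p)) * ((n : ℝ) + 1)⁻¹ := div_eq_mul_inv _ _
    _ ≤ exp (-(n * klNat (m / n) p)) * binomialPMF n (m / n) m :=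
        mul_le_mul_of_nonneg_left hinv (exp_pos _).le
    _ = binomialPMF n p m := (binomialPMF_eq_exp_mul hn hmn.le hp0 hp1).symm
    _ ≤ binomialCDF n p t := hterm

theorem abs_log_binomialCDF_add_mul_klNat_le {n : ℕ} (hn : 1 ≤ n) {p a : ℝ} (hp0 : 0 < p)
    (hp1 : p < 1) (ha0 : 0 ≤ a) (hap : a ≤ p) :
    |log (binomialCDF n p (n * a)) + n * klNat a p|
      ≤ 4 * log (n + 1) + max 0 (log (p / (1 - p))) := by
  have hn' : (0 : ℝ) < n := by exact_mod_cast hn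
  set m := ⌊(n : ℝ) * a⌋₊
  have hm : (m : ℝ) ≤ n * a := Nat.floor_le (by positivity)
  have hm' : (n : ℝ) * a < m + 1 := Nat.lt_floor_add_one _
  have hmn : m < n := by exact_mod_cast (show (m : ℝ) < n by nlinarith)
  have hxa : (m : ℝ) / n ≤ a := by rw [div_le_iff₀ hn']; linarith
  have hnax : (n : ℝ) * (a - m / n) ≤ 1 := by rw [mul_sub, mul_div_cancel₀ _ hn'.ne']; linarith
  have hup := binomialCDF_le hn hp0 hp1 ha0 hap
  have hlow := exp_neg_mul_klNat_div_le_binomialCDF hmn hp0 hp1 hm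
  have hgap := mul_klNat_sub_le (by exact_mod_cast hn) hp0.ne' hp1.ne (by positivity) hxa
    (hap.trans hp1.le) hnax
  have hpos : 0 < binomialCDF n p (n * a) := lt_of_lt_of_le (by positivity) hlow
  have hlog_up := log_le_log hpos hup
  rw [log_mul (by positivity) (exp_pos _).ne', log_exp] at hlog_up
  have hlog_low := log_le_log (by positivity) hlow
  rw [log_div (exp_pos _).ne' (by positivity), log_exp] at hlog_low
  have := log_add_two_le_three_mul_log_succ hn
  have := log_nonneg (by linarith : (1 : ℝ) ≤ n + 1)
  have := le_max_left 0 (log (p / (1 - p)))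
  rw [abs_le]
  constructor <;> linarith

theorem binomial_tail_kl_bound
    (n : ℕ) (hn : 1 ≤ n) (p : ℝ) (hp0 : 0 < p) (hp1 : p < 1)
    (a : ℝ) (ha0 : 0 ≤ a) (hap : a ≤ p) :
    |Real.logb 2 (∑ k ∈ Finset.range (n + 1),
        if (k : ℝ) ≤ n * a then (n.choose k : ℝ) * p ^ k * (1 - p) ^ (n - k) else 0)
      + n * klBin a p| ≤ 4 * Real.logb 2 (n + 1) + max 0 (Real.logb 2 (p / (1 - p))) := by
  have hlog2 : 0 < log 2 := log_pos one_lt_two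
  have hmax : max 0 (log (p / (1 - p)) / log 2) = max 0 (log (p / (1 - p))) / log 2 := by
    rw [← max_div_div_right hlog2.le, zero_div]
  have hlhs : logb 2 (binomialCDF n p (n * a)) + n * klBin a p
      = (log (binomialCDF n p (n * a)) + n * klNat a p) / log 2 := by
    simp only [logb, klBin, klNat]
    ring
  change |logb 2 (binomialCDF n p (n * a)) + n * klBin a p| ≤ _
  rw [hlhs, logb, logb, hmax, abs_div, abs_of_pos hlog2, mul_div_assoc', ← add_div]
  exact div_le_div_of_nonneg_right (abs_log_binomialCDF_add_mul_klNat_le hn hp0 hp1 ha0 hap)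
    hlog2.le
end

section
/- For every λ ∈ (0,1] and every q ∈ (0,1/2], the function p ↦ λ·KL(p‖q) + H(p) is monotone nondecreasing on [0,1/2]; consequently Q_λ(q) = inf_{p∈[0,1/2]} (λ·KL(p‖q) + H(p)) = -λ·log₂(1-q), with the infimum attained at p = 0. -/
open MeasureTheory Filter

/-!
Splitting `KL(p‖q) = C(p, q) - H(p)` with the cross entropy `C(p, q)` gives
`λ·KL(p‖q) + H(p) = (1 - λ)·H(p) + λ·C(p, q)`, a combination with nonnegative weights of the
binary entropy, which increases on `[0, 1/2]`, and of `C(·, q)`, which is affine with slope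
`log₂((1 - q)/q) ≥ 0`. Both terms are minimal at `p = 0`, where the sum is `-λ·log₂(1 - q)`.
-/

open Real Set

noncomputable def binCrossEnt (p q : ℝ) : ℝ :=
  -(p * logb 2 q + (1 - p) * logb 2 (1 - q))

lemma binEnt_zero : binEnt 0 = 0 := by
  simp [binEnt]

lemma binEnt_monotoneOn : MonotoneOn binEnt (Icc 0 (1 / 2)) := by
  intro a ha b hb hab
  simp only [binEnt_eq_binEntropy_div_log_two]
  rw [one_div] at ha hb
  gcongr
  exact binEntropy_strictMonoOn.monotoneOn ha hb hab

lemma binCrossEnt_zero (q : ℝ) : binCrossEnt 0 q = -logb 2 (1 - q) := by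
  simp [binCrossEnt]

lemma binCrossEnt_monotone {q : ℝ} (hq0 : 0 < q) (hq : q ≤ 1 / 2) :
    Monotone fun p => binCrossEnt p q := by
  have hslope : logb 2 q ≤ logb 2 (1 - q) :=
    logb_le_logb_of_le one_lt_two hq0 (by linarith)
  intro a b hab
  simp only [binCrossEnt]
  nlinarith

lemma mul_logb_div {b p q : ℝ} (hq : q ≠ 0) :
    p * logb b (p / q) = p * logb b p - p * logb b q := by
  rcases eq_or_ne p 0 with rfl | hp
  · simp
  · rw [logb_div hp hq]
    ring

lemma klBin_eq_binCrossEnt_sub_binEnt (p : ℝ) {q : ℝ} (hq0 : q ≠ 0) (hq1 : q ≠ 1) :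
    klBin p q = binCrossEnt p q - binEnt p := by
  rw [klBin, binCrossEnt, binEnt, mul_logb_div hq0, mul_logb_div (sub_ne_zero.2 hq1.symm)]
  ring

theorem Qlam_eq_of_small_lambda
    (lam : ℝ) (h0 : 0 < lam) (h1 : lam ≤ 1)
    (q : ℝ) (hq0 : 0 < q) (hq : q ≤ 1 / 2) :
    MonotoneOn (fun p => lam * klBin p q + binEnt p) (Set.Icc 0 (1 / 2)) ∧
    sInf ((fun p => lam * klBin p q + binEnt p) '' Set.Icc 0 (1 / 2))
      = -(lam * Real.logb 2 (1 - q)) ∧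
    lam * klBin 0 q + binEnt 0 = -(lam * Real.logb 2 (1 - q)) := by
  have hsplit : (fun p => lam * klBin p q + binEnt p)
      = fun p => (1 - lam) * binEnt p + lam * binCrossEnt p q := by
    funext p
    rw [klBin_eq_binCrossEnt_sub_binEnt p hq0.ne' (by linarith)]
    ring
  have hmono : MonotoneOn (fun p => lam * klBin p q + binEnt p) (Icc 0 (1 / 2)) := by
    rw [hsplit]
    intro a ha b hb hab
    have hlam : 0 ≤ 1 - lam := sub_nonneg.2 h1
    have hent := binEnt_monotoneOn ha hb hab
    have hcross := binCrossEnt_monotone hq0 hq hab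
    dsimp only
    gcongr
  have hval : lam * klBin 0 q + binEnt 0 = -(lam * logb 2 (1 - q)) := by
    rw [congrFun hsplit 0, binEnt_zero, binCrossEnt_zero]
    ring
  have hleast := hmono.map_isLeast (isLeast_Icc (by norm_num : (0 : ℝ) ≤ 1 / 2))
  exact ⟨hmono, hval ▸ hleast.csInf_eq, hval⟩
end

section
/- For every q ∈ (0,1/2]: q·(1-q)·( log₂(q/(1-q)) )² < 1. -/
open Real

lemma taylor4_le_exp {t : ℝ} (ht : 0 ≤ t) :
    1 + t + t^2/2 + t^3/6 + t^4/24 ≤ Real.exp t := by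
  have h := Real.sum_le_exp_of_nonneg ht 5
  have he : ∑ i ∈ Finset.range 5, t ^ i / (Nat.factorial i) =
      1 + t + t^2/2 + t^3/6 + t^4/24 := by
    simp [Finset.sum_range_succ, Nat.factorial]
  rw [he] at h
  exact h

lemma pow4_le_exp_neg {t : ℝ} (ht : 0 ≤ t) (ht4 : t ≤ 4) :
    (1 - t/4)^4 ≤ Real.exp (-t) := by
  have h1 : 1 - t/4 ≤ Real.exp (-(t/4)) := by
    have := Real.add_one_le_exp (-(t/4)); linarith
  have h0 : (0:ℝ) ≤ 1 - t/4 := by linarith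
  calc (1 - t/4)^4 ≤ (Real.exp (-(t/4)))^4 := pow_le_pow_left₀ h0 h1 4
    _ = Real.exp (-t) := by
        rw [← Real.exp_nat_mul, show ((4:ℕ):ℝ) * (-(t/4)) = -t by push_cast; ring]

lemma key_aux (t : ℝ) (ht : 0 ≤ t) :
    2 * t < Real.log 2 * (Real.exp t + Real.exp (-t)) := by
  have hL : (0.6931 : ℝ) < Real.log 2 := by
    have := Real.log_two_gt_d9; linarith
  have hT := taylor4_le_exp ht
  rcases le_or_gt t 4 with h4 | h4
  · have hN := pow4_le_exp_neg ht h4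
    nlinarith [sq_nonneg (t - 6/5), sq_nonneg (t - 2), sq_nonneg t,
      sq_nonneg (t^2 - 2*t), mul_nonneg ht (sq_nonneg (t - 6/5))]
  · have hN : (0:ℝ) < Real.exp (-t) := Real.exp_pos _
    have hLp : (0:ℝ) < Real.log 2 := by linarith
    have h1 : 0.6931 * (1 + t + t^2/2 + t^3/6 + t^4/24) ≤ Real.log 2 * Real.exp t := by
      have hpos : (0:ℝ) ≤ 1 + t + t^2/2 + t^3/6 + t^4/24 := by positivity
      nlinarith
    have h3 : (64:ℝ) ≤ t^3 := by nlinarith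
    have ht64 : 64 * t ≤ t^4 := by nlinarith
    nlinarith

theorem q_mul_one_sub_q_mul_sq_logb_lt_one
    (q : ℝ) (hq0 : 0 < q) (hq : q ≤ 1 / 2) :
    q * (1 - q) * (Real.logb 2 (q / (1 - q))) ^ 2 < 1 := by
  have h1q : 0 < 1 - q := by linarith
  set x := q / (1 - q) with hxdef
  have hx0 : 0 < x := div_pos hq0 h1q
  have hx1 : x ≤ 1 := by
    rw [hxdef, div_le_one h1q]; linarith
  set y := -Real.log x with hydef
  have hlogx : Real.log x = -y := by rw [hydef]; ring
  have hy : 0 ≤ y := by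
    have : Real.log x ≤ 0 := Real.log_nonpos hx0.le hx1
    rw [hydef]; linarith
  set E := Real.exp (y/2) with hEdef
  set s := Real.exp (-(y/2)) with hsdef
  have hEs : E * s = 1 := by
    rw [hEdef, hsdef, ← Real.exp_add]
    norm_num
  have hsx : s ^ 2 = x := by
    rw [hsdef, ← Real.exp_nat_mul]
    rw [show (2:ℕ) * (-(y/2)) = Real.log x by rw [hlogx]; push_cast; ring]
    exact Real.exp_log hx0
  have key := key_aux (y/2) (by linarith)
  have hky : y < Real.log 2 * (E + s) := by
    rw [hEdef, hsdef]; linarith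
  have hid : q * (1-q) * (E+s)^2 = 1 := by
    have h2 : q * (1-q) * (1+x)^2 = x := by
      rw [hxdef]; field_simp; ring
    have h4 : (E+s)^2 * x = (1+x)^2 := by
      calc (E+s)^2 * x = (E*s + s^2)^2 := by rw [← hsx]; ring
        _ = (1+x)^2 := by rw [hEs, hsx]
    have h5 : q * (1-q) * (E+s)^2 * x = 1 * x := by
      calc q * (1-q) * (E+s)^2 * x = q * (1-q) * ((E+s)^2 * x) := by ring
        _ = q * (1-q) * (1+x)^2 := by rw [h4]
        _ = x := h2
        _ = 1 * x := by ring
    exact mul_right_cancel₀ (ne_of_gt hx0) h5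
  have hy2 : y^2 < (Real.log 2 * (E+s))^2 := by
    have h0 : 0 < Real.log 2 * (E+s) := lt_of_le_of_lt hy hky
    nlinarith
  have hfin : q * (1-q) * y^2 < (Real.log 2)^2 := by
    have hstep : q * (1-q) * y^2 < q * (1-q) * (Real.log 2 * (E+s))^2 :=
      mul_lt_mul_of_pos_left hy2 (mul_pos hq0 h1q)
    have h6 : q * (1-q) * (Real.log 2 * (E+s))^2 = (Real.log 2)^2 := by
      calc q * (1-q) * (Real.log 2 * (E+s))^2
          = (Real.log 2)^2 * (q * (1-q) * (E+s)^2) := by ring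
        _ = (Real.log 2)^2 := by rw [hid, mul_one]
    linarith
  have hL2 : 0 < (Real.log 2)^2 := by
    have := Real.log_pos (by norm_num : (1:ℝ) < 2); positivity
  have hlb : Real.logb 2 x ^ 2 = y^2 / (Real.log 2)^2 := by
    rw [Real.logb, hlogx, div_pow, neg_pow]
    norm_num
  rw [hlb, mul_div_assoc', div_lt_one hL2]
  exact hfin
end

section
/- For every p ≥ 0 and every q ∈ (0,1/2] with p + q ≤ 1: |H(p+q) - H(p)| ≤ H(q), and moreover H(q) ≤ 2·q·log₂(1/q). -/
/-!
Up to the factor `1 / log 2`, `binEnt` is Mathlib's `Real.binEntropy`, which is concave on `[0, 1]`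
and vanishes at `0`; a concave function with `f 0 ≥ 0` is subadditive, so
`H(p + q) ≤ H(p) + H(q)`, and the symmetry `H(1 - x) = H(x)` turns this into
`H(p) = H((1 - p - q) + q) ≤ H(p + q) + H(q)`.

For the second bound, `x ↦ negMulLog x - negMulLog (1 - x)` is concave on `[0, 1/2]` (its second
derivative is `1 / (1 - x) - 1 / x ≤ 0`) and vanishes at both ends, so on that interval
`negMulLog (1 - q) ≤ negMulLog q`: the second summand of `H(q)` is at most the first.
-/

open MeasureTheory Filter

open Real Set

theorem ConcaveOn.mul_le_apply_smul {E : Type*} [AddCommGroup E] [Module ℝ E] {s : Set E}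
    {f : E → ℝ} (hf : ConcaveOn ℝ s f) (h0 : 0 ∈ s) (hf0 : 0 ≤ f 0) {x : E} (hx : x ∈ s)
    {t : ℝ} (ht0 : 0 ≤ t) (ht1 : t ≤ 1) : t * f x ≤ f (t • x) := by
  have h := hf.2 h0 hx (sub_nonneg.2 ht1) ht0 (sub_add_cancel 1 t)
  simp only [smul_zero, zero_add, smul_eq_mul] at h
  nlinarith [mul_nonneg (sub_nonneg.2 ht1) hf0]

theorem ConcaveOn.add_le {s : Set ℝ} {f : ℝ → ℝ} (hf : ConcaveOn ℝ s f) (h0 : 0 ∈ s)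
    (hf0 : 0 ≤ f 0) {x y : ℝ} (hx : 0 ≤ x) (hy : 0 ≤ y) (hxy : x + y ∈ s) :
    f (x + y) ≤ f x + f y := by
  rcases (add_nonneg hx hy).eq_or_lt with hsum | hsum
  · obtain ⟨rfl, rfl⟩ : x = 0 ∧ y = 0 := ⟨by linarith, by linarith⟩
    simpa using hf0
  have key : ∀ z, 0 ≤ z → z ≤ x + y → z / (x + y) * f (x + y) ≤ f z := fun z hz0 hz1 => by
    simpa [div_mul_cancel₀ z hsum.ne'] using
      hf.mul_le_apply_smul h0 hf0 hxy (div_nonneg hz0 hsum.le) ((div_le_one hsum).2 hz1)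
  have hx' := key x hx (by linarith)
  have hy' := key y hy (by linarith)
  calc f (x + y) = x / (x + y) * f (x + y) + y / (x + y) * f (x + y) := by
        rw [← add_mul, ← add_div, div_self hsum.ne', one_mul]
    _ ≤ f x + f y := add_le_add hx' hy'

lemma binEnt_eq_binEntropy_div (x : ℝ) : binEnt x = binEntropy x / log 2 := by
  simp only [binEnt, binEntropy, logb, log_inv]
  ring

lemma binEnt_eq_negMulLog_div (x : ℝ) :
    binEnt x = (negMulLog x + negMulLog (1 - x)) / log 2 := by
  rw [binEnt_eq_binEntropy_div, binEntropy_eq_negMulLog_add_negMulLog_one_sub]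

lemma binEnt_one_sub (x : ℝ) : binEnt (1 - x) = binEnt x := by
  simp only [binEnt_eq_binEntropy_div, binEntropy_one_sub]

lemma concaveOn_binEnt : ConcaveOn ℝ (Icc 0 1) binEnt :=
  (strictConcave_binEntropy.concaveOn.smul (inv_nonneg.2 (log_nonneg one_le_two))).congr
    fun x _ => by simp only [binEnt_eq_binEntropy_div, smul_eq_mul, div_eq_inv_mul]

lemma binEnt_add_le {x y : ℝ} (hx : 0 ≤ x) (hy : 0 ≤ y) (hxy : x + y ≤ 1) :
    binEnt (x + y) ≤ binEnt x + binEnt y :=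
  concaveOn_binEnt.add_le ⟨le_rfl, zero_le_one⟩ (by simp [binEnt]) hx hy
    ⟨add_nonneg hx hy, hxy⟩

lemma concaveOn_negMulLog_sub_negMulLog_one_sub :
    ConcaveOn ℝ (Icc 0 (1 / 2)) fun x => negMulLog x - negMulLog (1 - x) := by
  refine concaveOn_of_hasDerivWithinAt2_nonpos (convex_Icc 0 (1 / 2))
    (f' := fun x => -log x - log (1 - x) - 2) (f'' := fun x => -x⁻¹ + (1 - x)⁻¹)
    (by fun_prop) ?_ ?_ ?_ <;>
    simp only [interior_Icc] <;> rintro x ⟨hx0, hx1⟩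
  · have hx1' : 1 - x ≠ 0 := by linarith
    have h := (hasDerivAt_negMulLog hx0.ne').sub
      ((hasDerivAt_negMulLog hx1').comp x ((hasDerivAt_id x).const_sub 1))
    exact (h.congr_deriv (by simp only [mul_neg, mul_one, neg_sub, sub_neg_eq_add]; ring)).hasDerivWithinAt
  · have hx1' : 1 - x ≠ 0 := by linarith
    have h := ((hasDerivAt_log hx0.ne').neg.sub
      ((hasDerivAt_log hx1').comp x ((hasDerivAt_id x).const_sub 1))).sub_const 2
    exact (h.congr_deriv (by simp)).hasDerivWithinAt
  · linarith [inv_anti₀ hx0 (by linarith : x ≤ 1 - x)]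

lemma negMulLog_one_sub_le {x : ℝ} (hx0 : 0 ≤ x) (hx : x ≤ 1 / 2) :
    negMulLog (1 - x) ≤ negMulLog x := by
  have hseg : x ∈ segment ℝ 0 (1 / 2) := by
    rw [segment_eq_Icc (by norm_num)]
    exact ⟨hx0, hx⟩
  have h := concaveOn_negMulLog_sub_negMulLog_one_sub.ge_on_segment
    (left_mem_Icc.2 (by norm_num)) (right_mem_Icc.2 (by norm_num)) hseg
  rw [show (1 : ℝ) - 1 / 2 = 1 / 2 by norm_num] at h
  simp only [sub_zero, sub_self, negMulLog_zero, negMulLog_one, min_self] at h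
  exact sub_nonneg.1 h

lemma negMulLog_div_log_two (x : ℝ) : negMulLog x / log 2 = x * logb 2 (1 / x) := by
  rw [negMulLog, logb, one_div, log_inv]
  ring

theorem entropy_diff_le (p q : ℝ) (hp : 0 ≤ p) (hq0 : 0 < q) (hq : q ≤ 1 / 2)
    (hpq : p + q ≤ 1) :
    |binEnt (p + q) - binEnt p| ≤ binEnt q ∧ binEnt q ≤ 2 * q * Real.logb 2 (1 / q) := by
  refine ⟨abs_sub_le_iff.2 ⟨?_, ?_⟩, ?_⟩
  · linarith [binEnt_add_le hp hq0.le hpq]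
  · have h := binEnt_add_le (x := 1 - p - q) (y := q) (by linarith) hq0.le (by linarith)
    rw [sub_add_cancel, binEnt_one_sub, sub_sub, binEnt_one_sub] at h
    linarith
  · rw [binEnt_eq_negMulLog_div, mul_assoc, ← negMulLog_div_log_two, ← mul_div_assoc]
    gcongr
    linarith [negMulLog_one_sub_le hq0.le hq]
end

section
/- For every q ∈ (0,1/2): 1 - 2^{-H(q)} > q and 1 - 2^{-H(q)} > H(q)/2. (In words: the worst-case limiting error ℓ_1(q) = 1 - 2^{-H(q)} of the two-part-code MDL rule with λ = 1 strictly exceeds both the noise level q and the lower bound H(q)/2 of Grünwald–Langford.) -/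
open MeasureTheory Filter

lemma binEnt_eq (p : ℝ) : binEnt p = Real.binEntropy p / Real.log 2 := by
  simp only [binEnt, Real.binEntropy, Real.logb, Real.log_inv]
  ring

theorem ell_one_gt (q : ℝ) (hq0 : 0 < q) (hq : q < 1 / 2) :
    q < 1 - (2 : ℝ) ^ (-(binEnt q)) ∧ binEnt q / 2 < 1 - (2 : ℝ) ^ (-(binEnt q)) := by
  have hlog2 : (0:ℝ) < Real.log 2 := Real.log_pos (by norm_num)
  set h := binEnt q with hh
  have hq1 : q < 1 := by linarith
  have h1q : 0 < 1 - q := by linarith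
  have hpos : 0 < h := by
    rw [hh, binEnt_eq]
    exact div_pos (Real.binEntropy_pos hq0 hq1) hlog2
  have hlt1 : h < 1 := by
    rw [hh, binEnt_eq, div_lt_one hlog2]
    exact Real.binEntropy_lt_log_two.2 (by rw [show (2:ℝ)⁻¹ = 1/2 by norm_num]; exact hq.ne)
  constructor
  · -- q < 1 - 2^(-h) ⟺ 2^(-h) < 1 - q
    have key : (2:ℝ) ^ (-h) < 1 - q := by
      have hlb : Real.logb 2 q < Real.logb 2 (1 - q) :=
        Real.logb_lt_logb (by norm_num) hq0 (by linarith)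
      have hneg : -h < Real.logb 2 (1 - q) := by
        rw [hh]; unfold binEnt
        nlinarith [hlb, hq0]
      calc (2:ℝ) ^ (-h) < (2:ℝ) ^ Real.logb 2 (1 - q) :=
            (Real.rpow_lt_rpow_left_iff (by norm_num)).2 hneg
        _ = 1 - q := Real.rpow_logb (by norm_num) (by norm_num) h1q
    linarith
  · -- h/2 < 1 - 2^(-h) ⟺ 2^(-h) < 1 - h/2, by strict convexity of exp
    have hconv := strictConvexOn_exp.2 (Set.mem_univ (0:ℝ)) (Set.mem_univ (-Real.log 2))
      (by intro hc; exact hlog2.ne' (by linarith [neg_eq_zero.1 hc.symm]))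
      (show (0:ℝ) < 1 - h by linarith) hpos (show (1 - h) + h = 1 by ring)
    simp only [smul_eq_mul, mul_zero, zero_add, Real.exp_zero, mul_one] at hconv
    have he : Real.exp (-Real.log 2) = 1/2 := by
      rw [Real.exp_neg, Real.exp_log (by norm_num)]; norm_num
    rw [he] at hconv
    have hr : (2:ℝ) ^ (-h) = Real.exp (h * -Real.log 2) := by
      rw [Real.rpow_def_of_pos (by norm_num)]; ring_nf
    nlinarith [hconv]
end
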